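/- If f : [1, ∞) → (0, ∞) is differentiable and satisfies f'(r) = (c/r^{α+1})·f(r)² for all r ≥ 1, where c, α > 0, and f(r)·r^{−α} → L > 0 as r → ∞, then L = α/c, i.e. f(r) ∼ (α/c)·r^α as r → ∞. -/

import Mathlib

/-!
The equation is a Bernoulli equation: it says exactly that `1 / f(r) - (c / α) r^(-α)` has
derivative zero, so this function is constant on `[1, ∞)`. Both of its terms tend to `0`
(the first because `f(r) r^(-α) → L ≠ 0`), so the constant is `0`. Hence
`f(r) r^(-α) = α / c` for every `r ≥ 1`, and the limit `L` must be `α / c`.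
-/

open Filter Set Topology

theorem eq_of_hasDerivAt_zero_of_tendsto_atTop {E : Type*} [NormedAddCommGroup E]
    [NormedSpace ℝ E] {h : ℝ → E} {a : ℝ} {l : E}
    (hd : ∀ x, a ≤ x → HasDerivAt h 0 x) (hl : Tendsto h atTop (𝓝 l)) :
    ∀ x, a ≤ x → h x = l := by
  have hconst : ∀ x, a ≤ x → h x = h a := fun x hx =>
    constant_of_has_deriv_right_zero
      (fun y hy => (hd y hy.1).continuousAt.continuousWithinAt)
      (fun y hy => (hd y hy.1).hasDerivWithinAt) x ⟨hx, le_rfl⟩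
  have hla : Tendsto h atTop (𝓝 (h a)) :=
    tendsto_const_nhds.congr' <| (eventually_ge_atTop a).mono fun x hx => (hconst x hx).symm
  intro x hx
  rw [hconst x hx, tendsto_nhds_unique hla hl]

theorem hasDerivAt_inv_sub_rpow_neg_of_bernoulli {f : ℝ → ℝ} {c α r : ℝ} (hα : α ≠ 0)
    (hr : 0 < r) (hf : f r ≠ 0) (hderiv : HasDerivAt f (c / r ^ (α + 1) * f r ^ 2) r) :
    HasDerivAt (fun x => (f x)⁻¹ - c / α * x ^ (-α)) 0 r := by
  have hrpow : HasDerivAt (fun x : ℝ => x ^ (-α)) (-α * r ^ (-α - 1)) r :=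
    Real.hasDerivAt_rpow_const (Or.inl hr.ne')
  refine ((hderiv.inv hf).sub (hrpow.const_mul (c / α))).congr_deriv ?_
  rw [show -α - 1 = -(α + 1) by ring, Real.rpow_neg hr.le]
  field_simp
  ring

theorem tendsto_inv_atTop_zero_of_tendsto_mul_rpow_neg {f : ℝ → ℝ} {α L : ℝ} (hα : 0 < α)
    (hL : L ≠ 0) (hlim : Tendsto (fun r => f r * r ^ (-α)) atTop (𝓝 L)) :
    Tendsto (fun r => (f r)⁻¹) atTop (𝓝 0) := by
  have hquot : Tendsto (fun r => r ^ (-α) / (f r * r ^ (-α))) atTop (𝓝 (0 / L)) :=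
    (tendsto_rpow_neg_atTop hα).div hlim hL
  rw [zero_div] at hquot
  refine hquot.congr' <| (eventually_gt_atTop 0).mono fun r hr => ?_
  have : r ^ (-α) ≠ 0 := (Real.rpow_pos_of_pos hr _).ne'
  field_simp

theorem susceptibility_ode_limit
    (c α L : ℝ) (hc : 0 < c) (hα : 0 < α) (hL : 0 < L)
    (f : ℝ → ℝ)
    (hpos : ∀ r : ℝ, 1 ≤ r → 0 < f r)
    (hderiv : ∀ r : ℝ, 1 ≤ r → HasDerivAt f (c / r ^ (α + 1) * (f r) ^ 2) r)
    (hlim : Tendsto (fun r : ℝ => f r * r ^ (-α)) atTop (nhds L)) :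
    L = α / c := by
  have hinv_tendsto : Tendsto (fun r => (f r)⁻¹ - c / α * r ^ (-α)) atTop (𝓝 0) := by
    simpa using (tendsto_inv_atTop_zero_of_tendsto_mul_rpow_neg hα hL.ne' hlim).sub
      ((tendsto_rpow_neg_atTop hα).const_mul (c / α))
  have hinv : ∀ r, 1 ≤ r → (f r)⁻¹ - c / α * r ^ (-α) = 0 :=
    eq_of_hasDerivAt_zero_of_tendsto_atTop
      (fun r hr => hasDerivAt_inv_sub_rpow_neg_of_bernoulli hα.ne' (by linarith)
        (hpos r hr).ne' (hderiv r hr)) hinv_tendsto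
  have hscaled : ∀ r, 1 ≤ r → f r * r ^ (-α) = α / c := fun r hr => by
    have hfr : f r = (c / α * r ^ (-α))⁻¹ := by rw [← sub_eq_zero.mp (hinv r hr), inv_inv]
    have : r ^ (-α) ≠ 0 := (Real.rpow_pos_of_pos (by linarith) _).ne'
    rw [hfr]
    field_simp
  refine tendsto_nhds_unique hlim (tendsto_const_nhds.congr' ?_)
  exact (eventually_ge_atTop 1).mono fun r hr => (hscaled r hr).symm
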